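/- Let R be a commutative ring. For subtractive ideals I, J of the semiring fgId(R), define I × J := ⟨IJ⟩_k, the subtractive closure of the set of finite sums a₁b₁ + ⋯ + aₙbₙ with aᵢ ∈ I, bᵢ ∈ J. Then: (i) I × (J + K) = I × J + I × K for all subtractive ideals I, J, K of fgId(R); (ii) the bijection ũ : Id(R) → Id_k(fgId(R)), I ↦ ⟨u_R(I)⟩_k, satisfies ũ(IJ) = ũ(I) × ũ(J) for all ideals I, J of R. In particular ũ is a semiring isomorphism from (Id(R), +, ·) onto (Id_k(fgId(R)), +, ×). -/

import Mathlib

/-- The type of finitely generated ideals of a commutative ring `R`. -/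
def FGIdeal (R : Type*) [CommRing R] : Type _ := {I : Ideal R // I.FG}

namespace FGIdeal

variable {R : Type*} [CommRing R]

instance : Zero (FGIdeal R) := ⟨⟨⊥, Submodule.fg_bot⟩⟩

instance : One (FGIdeal R) := ⟨⟨1, ⟨{1}, by simp [Ideal.one_eq_top]⟩⟩⟩

instance : Add (FGIdeal R) :=
  ⟨fun I J => ⟨I.1 + J.1, by rw [Submodule.add_eq_sup]; exact Submodule.FG.sup I.2 J.2⟩⟩

instance : Mul (FGIdeal R) := ⟨fun I J => ⟨I.1 * J.1, Submodule.FG.mul I.2 J.2⟩⟩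

instance : SMul ℕ (FGIdeal R) :=
  ⟨fun n I => ⟨n • I.1, by
    induction n with
    | zero => simp; exact Submodule.fg_bot
    | succ n ih => rw [succ_nsmul, Submodule.add_eq_sup]; exact Submodule.FG.sup ih I.2⟩⟩

instance : Pow (FGIdeal R) ℕ := ⟨fun I n => ⟨I.1 ^ n, Submodule.FG.pow I.2 n⟩⟩

instance : NatCast (FGIdeal R) :=
  ⟨fun n => ⟨(n : Ideal R), by
    induction n with
    | zero => simp; exact Submodule.fg_bot
    | succ n ih =>
        rw [Nat.cast_succ, Submodule.add_eq_sup]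
        exact Submodule.FG.sup ih ⟨{1}, by simp [Ideal.one_eq_top]⟩⟩⟩

instance : CommSemiring (FGIdeal R) :=
  Subtype.val_injective.commSemiring (fun I : FGIdeal R => I.1) rfl rfl
    (fun _ _ => rfl) (fun _ _ => rfl) (fun _ _ => rfl) (fun _ _ => rfl) (fun _ => rfl)

end FGIdeal

variable {R : Type*} [CommRing R]

/-- The universal integral seminorm `u_R : R → fgId(R)`, `a ↦ R·a`. -/
def uRfg (a : R) : FGIdeal R := ⟨Ideal.span {a}, Submodule.fg_span_singleton a⟩
section SemiringIdeals

variable {S : Type*} [CommSemiring S]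

/-- A subset of a commutative semiring which is an ideal: it contains `0` and is closed
under addition and under multiplication by arbitrary elements. -/
def IsIdealSet (I : Set S) : Prop :=
  (0 : S) ∈ I ∧ (∀ a ∈ I, ∀ b ∈ I, a + b ∈ I) ∧ ∀ (c : S), ∀ a ∈ I, c * a ∈ I

/-- A subset `I` is subtractive if `a + b ∈ I` and `a ∈ I` imply `b ∈ I`. -/
def IsSubtractiveSet (I : Set S) : Prop :=
  ∀ a b : S, a + b ∈ I → a ∈ I → b ∈ I

/-- A `k`-ideal (subtractive ideal) of a commutative semiring. -/
def IsKIdeal (I : Set S) : Prop := IsIdealSet I ∧ IsSubtractiveSet I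

/-- The smallest subtractive ideal containing a subset `X`. -/
def kClosure (X : Set S) : Set S := ⋂₀ {J : Set S | IsKIdeal J ∧ X ⊆ J}

/-- The smallest ideal containing a subset `X`. -/
def idealGen (X : Set S) : Set S := ⋂₀ {J : Set S | IsIdealSet J ∧ X ⊆ J}

/-- An ideal of a commutative semiring is prime when its complement is multiplicatively
closed: `1 ∉ I` and `a * b ∈ I` implies `a ∈ I` or `b ∈ I`. -/
def IsPrimeSet (I : Set S) : Prop :=
  (1 : S) ∉ I ∧ ∀ a b : S, a * b ∈ I → a ∈ I ∨ b ∈ I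

end SemiringIdeals

/-- The map `Id(R) → Id_k(fgId(R))`, `I ↦ ⟨u_R(I)⟩_k`. -/
def uRtilde {R : Type*} [CommRing R] (I : Ideal R) : Set (FGIdeal R) :=
  kClosure (uRfg '' (I : Set R))

/-- The sum of two subtractive ideals in `Id_k`: the subtractive closure of the set of
elementwise sums. -/
def addK {S : Type*} [CommSemiring S] (A B : Set S) : Set S :=
  kClosure {x : S | ∃ a ∈ A, ∃ b ∈ B, x = a + b}

/-- The product `I × J := ⟨IJ⟩_k` of two subtractive ideals: the subtractive closure of
the set of finite sums `a₁b₁ + ⋯ + aₙbₙ` with `aᵢ ∈ I` and `bᵢ ∈ J`. -/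
def mulK {S : Type*} [CommSemiring S] (A B : Set S) : Set S :=
  kClosure {x : S | ∃ n : ℕ, 1 ≤ n ∧ ∃ a b : Fin n → S,
    (∀ i, a i ∈ A) ∧ (∀ i, b i ∈ B) ∧ x = ∑ i, a i * b i}

/-!
A subtractive ideal `Λ` of `fgId(R)` is downward closed for inclusion (if `x ⊆ y` then
`y + x = y`) and closed under finite sums, while every finitely generated ideal is a finite
sum of principal ones. Hence `Λ` consists exactly of the finitely generated ideals contained
in the ideal `{a | R·a ∈ Λ}`, and `I ↦ {x | x ⊆ I}` is a bijection `Id(R) ≃ Id_k(fgId(R))`.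
In particular the subtractive closure of any set `X` is `{x | x ⊆ ⨆ X}`, which turns `+` and
`×` of subtractive ideals into `+` and `·` of ideals of `R`; distributivity is then
inherited from `Id(R)`.
-/

namespace FGIdeal

def valHom : FGIdeal R →+* Ideal R where
  toFun := Subtype.val
  map_zero' := rfl
  map_one' := rfl
  map_add' _ _ := rfl
  map_mul' _ _ := rfl

lemma val_add (x y : FGIdeal R) : (x + y).1 = x.1 ⊔ y.1 := Submodule.add_eq_sup _ _

lemma add_eq_left_of_val_le {x y : FGIdeal R} (h : x.1 ≤ y.1) : y + x = y :=
  Subtype.ext <| (val_add y x).trans (sup_eq_left.2 h)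

lemma val_sum_uRfg (s : Finset R) : (∑ a ∈ s, uRfg a).1 = Ideal.span s := by
  change valHom (∑ a ∈ s, uRfg a) = _
  rw [map_sum, Ideal.sum_eq_sup, Finset.sup_eq_iSup, Ideal.span,
    Submodule.span_eq_iSup_of_singleton_spans]
  rfl

lemma exists_eq_sum_uRfg (x : FGIdeal R) : ∃ s : Finset R, x = ∑ a ∈ s, uRfg a := by
  obtain ⟨s, hs⟩ := x.2
  exact ⟨s, Subtype.ext (by rw [val_sum_uRfg, hs])⟩

lemma add_mem_val_uRfg_add (a b : R) : a + b ∈ (uRfg a + uRfg b).1 := by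
  rw [val_add]
  exact Submodule.add_mem_sup (Ideal.mem_span_singleton_self a) (Ideal.mem_span_singleton_self b)

lemma mul_mem_val_uRfg_mul (a b : R) : a * b ∈ (uRfg a * uRfg b).1 :=
  Ideal.mul_mem_mul (Ideal.mem_span_singleton_self a) (Ideal.mem_span_singleton_self b)

end FGIdeal

open FGIdeal

lemma IsIdealSet.sum_mem {S ι : Type*} [CommSemiring S] {Λ : Set S} (hΛ : IsIdealSet Λ)
    {s : Finset ι} {f : ι → S} (h : ∀ i ∈ s, f i ∈ Λ) : ∑ i ∈ s, f i ∈ Λ :=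
  Finset.sum_induction f (· ∈ Λ) (fun a b ha hb => hΛ.2.1 a ha b hb) hΛ.1 h

lemma val_uRfg_le_iff {a : R} {I : Ideal R} : (uRfg a).1 ≤ I ↔ a ∈ I :=
  Ideal.span_singleton_le_iff_mem I

lemma IsSubtractiveSet.mem_of_val_le {Λ : Set (FGIdeal R)} (hΛ : IsSubtractiveSet Λ)
    {x y : FGIdeal R} (hxy : x.1 ≤ y.1) (hy : y ∈ Λ) : x ∈ Λ :=
  hΛ y x (by rwa [add_eq_left_of_val_le hxy]) hy

lemma isKIdeal_setOf_val_le (I : Ideal R) : IsKIdeal {x : FGIdeal R | x.1 ≤ I} := by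
  refine ⟨⟨bot_le (a := I), fun a ha b hb => ?_, fun c a (ha : a.1 ≤ I) => ?_⟩,
    fun a b hab _ => ?_⟩
  · exact (val_add a b).trans_le (sup_le ha hb)
  · exact Ideal.mul_le_right.trans ha
  · exact le_sup_right.trans ((val_add a b).symm.trans_le hab)

def IsKIdeal.toIdeal {Λ : Set (FGIdeal R)} (hΛ : IsKIdeal Λ) : Ideal R where
  carrier := {a | uRfg a ∈ Λ}
  zero_mem' := hΛ.2.mem_of_val_le (val_uRfg_le_iff.2 (Submodule.zero_mem _)) hΛ.1.1
  add_mem' {a b} ha hb :=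
    hΛ.2.mem_of_val_le (val_uRfg_le_iff.2 (add_mem_val_uRfg_add a b)) (hΛ.1.2.1 _ ha _ hb)
  smul_mem' c a ha :=
    hΛ.2.mem_of_val_le (val_uRfg_le_iff.2 (Ideal.mul_mem_left _ c
      (Ideal.mem_span_singleton_self a))) ha

lemma IsKIdeal.eq_setOf_val_le_toIdeal {Λ : Set (FGIdeal R)} (hΛ : IsKIdeal Λ) :
    Λ = {x | x.1 ≤ hΛ.toIdeal} := by
  ext x
  refine ⟨fun hx a ha => hΛ.2.mem_of_val_le (val_uRfg_le_iff.2 ha) hx, fun hx => ?_⟩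
  obtain ⟨s, rfl⟩ := exists_eq_sum_uRfg x
  refine hΛ.1.sum_mem fun a ha => hx ?_
  rw [val_sum_uRfg]
  exact Ideal.subset_span ha

lemma kClosure_eq_setOf_val_le_iSup (X : Set (FGIdeal R)) :
    kClosure X = {x | x.1 ≤ ⨆ y ∈ X, y.1} := by
  apply subset_antisymm
  · exact Set.sInter_subset_of_mem
      ⟨isKIdeal_setOf_val_le _, fun y hy => le_iSup₂ (f := fun y (_ : y ∈ X) => y.1) y hy⟩
  · rintro x hx J ⟨hJ, hXJ⟩
    rw [hJ.eq_setOf_val_le_toIdeal] at hXJ ⊢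
    exact (show x.1 ≤ _ from hx).trans (iSup₂_le fun y hy => hXJ hy)

lemma mem_iSup_val_of_mem {X : Set (FGIdeal R)} {y : FGIdeal R} (hy : y ∈ X) {a : R}
    (ha : a ∈ y.1) : a ∈ ⨆ y ∈ X, y.1 :=
  le_iSup₂ (f := fun y (_ : y ∈ X) => y.1) y hy ha

lemma kClosure_eq_setOf_val_le {X : Set (FGIdeal R)} {I : Ideal R}
    (hle : ∀ y ∈ X, y.1 ≤ I) (hge : I ≤ ⨆ y ∈ X, y.1) : kClosure X = {x | x.1 ≤ I} := by
  rw [kClosure_eq_setOf_val_le_iSup, le_antisymm (iSup₂_le hle) hge]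

lemma uRtilde_eq_setOf_val_le (I : Ideal R) : uRtilde I = {x : FGIdeal R | x.1 ≤ I} :=
  kClosure_eq_setOf_val_le (by rintro _ ⟨a, ha, rfl⟩; exact val_uRfg_le_iff.2 ha)
    fun a ha => mem_iSup_val_of_mem (Set.mem_image_of_mem uRfg ha)
      (Ideal.mem_span_singleton_self a)

lemma uRfg_mem_uRtilde_iff {I : Ideal R} {a : R} : uRfg a ∈ uRtilde I ↔ a ∈ I := by
  rw [uRtilde_eq_setOf_val_le]
  exact val_uRfg_le_iff

lemma uRtilde_injective : Function.Injective (uRtilde (R := R)) := fun I J h => by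
  ext a
  rw [← uRfg_mem_uRtilde_iff, h, uRfg_mem_uRtilde_iff]

lemma uRtilde_toIdeal {Λ : Set (FGIdeal R)} (hΛ : IsKIdeal Λ) : uRtilde hΛ.toIdeal = Λ := by
  rw [uRtilde_eq_setOf_val_le, ← hΛ.eq_setOf_val_le_toIdeal]

lemma uRtilde_add (I J : Ideal R) : uRtilde (I + J) = addK (uRtilde I) (uRtilde J) := by
  simp only [addK, uRtilde_eq_setOf_val_le]
  refine Eq.symm (kClosure_eq_setOf_val_le ?_ fun r hr => ?_)
  · rintro _ ⟨a, ha, b, hb, rfl⟩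
    exact (val_add a b).trans_le (sup_le_sup ha hb)
  · obtain ⟨a, ha, b, hb, rfl⟩ := Submodule.mem_sup.1 hr
    refine mem_iSup_val_of_mem ?_ (add_mem_val_uRfg_add a b)
    exact ⟨_, val_uRfg_le_iff.2 ha, _, val_uRfg_le_iff.2 hb, rfl⟩

lemma uRtilde_mul (I J : Ideal R) : uRtilde (I * J) = mulK (uRtilde I) (uRtilde J) := by
  simp only [mulK, uRtilde_eq_setOf_val_le]
  refine Eq.symm (kClosure_eq_setOf_val_le ?_ (Submodule.mul_le.2 fun m hm n hn => ?_))
  · rintro _ ⟨n, -, a, b, ha, hb, rfl⟩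
    change valHom (∑ i, a i * b i) ≤ I * J
    rw [map_sum, Ideal.sum_eq_sup]
    exact Finset.sup_le fun i _ => Ideal.mul_mono (ha i) (hb i)
  · refine mem_iSup_val_of_mem ?_ (mul_mem_val_uRfg_mul m n)
    exact ⟨1, le_rfl, ![uRfg m], ![uRfg n], Fin.forall_fin_one.2 (val_uRfg_le_iff.2 hm),
      Fin.forall_fin_one.2 (val_uRfg_le_iff.2 hn),
      (Fin.sum_univ_one fun i => ![uRfg m] i * ![uRfg n] i).symm⟩

/-- The product `I × J = ⟨IJ⟩_k` on subtractive ideals of `fgId(R)`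
distributes over sums, and `ũ : Id(R) → Id_k(fgId(R))`, `I ↦ ⟨u_R(I)⟩_k`, is a semiring
isomorphism from `(Id(R), +, ·)` onto `(Id_k(fgId(R)), +, ×)`. -/
theorem uRtilde_semiring_isomorphism (R : Type*) [CommRing R] :
    (∀ I J K : Set (FGIdeal R), IsKIdeal I → IsKIdeal J → IsKIdeal K →
      mulK I (addK J K) = addK (mulK I J) (mulK I K)) ∧
    (∀ I J : Ideal R, uRtilde (I * J) = mulK (uRtilde I) (uRtilde J)) ∧
    (∀ I J : Ideal R, uRtilde (I + J) = addK (uRtilde I) (uRtilde J)) ∧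
    (∀ Λ : Set (FGIdeal R), IsKIdeal Λ → ∃! I : Ideal R, uRtilde I = Λ) := by
  refine ⟨fun I J K hI hJ hK => ?_, uRtilde_mul, uRtilde_add, fun Λ hΛ =>
    ⟨hΛ.toIdeal, uRtilde_toIdeal hΛ, fun I hI =>
      uRtilde_injective (hI.trans (uRtilde_toIdeal hΛ).symm)⟩⟩
  rw [← uRtilde_toIdeal hI, ← uRtilde_toIdeal hJ, ← uRtilde_toIdeal hK, ← uRtilde_add,
    ← uRtilde_mul, ← uRtilde_mul, ← uRtilde_mul, ← uRtilde_add, mul_add]
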